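/- For any n ∈ ℕ and t ∈ [0,T], the tail sum over ℓ ≥ n+1 and j = 1,...,2^n of E_{2^{ℓ-1}+j}(t)^2 + ∫_0^t E_{2^{ℓ-1}+j}(τ)^2 dτ is bounded above by 2T(1+t)·2^{-n}. -/

import Mathlib

/-!
Each `E ℓ j` is a tent: it vanishes off the `j`-th dyadic interval of level `ℓ`, rises with
slope `√(2^(ℓ-1)/T)` to its midpoint and falls back, so `E ℓ j ^ 2 ≤ T / 2^(ℓ+1)`. The tents of
one level have disjoint supports, hence at each time the level-`ℓ` sum of squares is at most
`T / 2^(ℓ+1)`, and its integral over `[0, t]` at most `t T / 2^(ℓ+1)`. Summing the geometric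
series over the levels `ℓ > n` gives `(1 + t) T / 2^(n+1)`.
-/

open MeasureTheory Set

theorem integrable_indicator_Icc_one (a b : ℝ) :
    Integrable ((Icc a b).indicator fun _ => (1 : ℝ)) :=
  (integrableOn_const measure_Icc_lt_top.ne).integrable_indicator measurableSet_Icc

theorem intervalIntegral_indicator_Icc_one (a b t : ℝ) (ht : 0 ≤ t) :
    ∫ s in (0 : ℝ)..t, (Icc a b).indicator (fun _ => (1 : ℝ)) s = max (min t b - max 0 a) 0 := by
  rw [intervalIntegral.integral_of_le ht, ← integral_Icc_eq_integral_Ioc,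
    setIntegral_indicator measurableSet_Icc, Icc_inter_Icc, setIntegral_const, smul_eq_mul,
    mul_one, Real.volume_real_Icc]

theorem intervalIntegral_indicator_sub_indicator_eq_tent (m h t : ℝ) (hhm : h ≤ m)
    (ht : 0 ≤ t) :
    ∫ s in (0 : ℝ)..t, ((Icc (m - h) m).indicator (fun _ => (1 : ℝ)) s
        - (Icc m (m + h)).indicator (fun _ => (1 : ℝ)) s) = max (h - |t - m|) 0 := by
  rw [intervalIntegral.integral_sub (integrable_indicator_Icc_one _ _).intervalIntegrable
    (integrable_indicator_Icc_one _ _).intervalIntegrable,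
    intervalIntegral_indicator_Icc_one _ _ _ ht, intervalIntegral_indicator_Icc_one _ _ _ ht]
  grind

theorem le_abs_sub_or_le_abs_sub {x y h : ℝ} (hxy : 2 * h ≤ |x - y|) (t : ℝ) :
    h ≤ |t - x| ∨ h ≤ |t - y| := by
  by_contra! H
  linarith [abs_sub_le x t y, abs_sub_comm x t]

theorem Finset.sum_le_of_pairwise_eq_zero_or_eq_zero {ι M : Type*} [AddCommMonoid M]
    [PartialOrder M] [IsOrderedAddMonoid M] {s : Finset ι} {f : ι → M} {c : M} (hc : 0 ≤ c)
    (hf : ∀ i ∈ s, f i ≤ c) (hs : ∀ i ∈ s, ∀ j ∈ s, i ≠ j → f i = 0 ∨ f j = 0) :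
    ∑ i ∈ s, f i ≤ c := by
  classical
  have hcard : (s.filter (f · ≠ 0)).card ≤ 1 := by
    refine Finset.card_le_one.2 fun i hi j hj => ?_
    rw [Finset.mem_filter] at hi hj
    by_contra hij
    rcases hs i hi.1 j hj.1 hij with h | h
    exacts [hi.2 h, hj.2 h]
  calc ∑ i ∈ s, f i = ∑ i ∈ s.filter (f · ≠ 0), f i := (Finset.sum_filter_ne_zero s).symm
    _ ≤ (s.filter (f · ≠ 0)).card • c :=
      Finset.sum_le_card_nsmul _ _ _ fun i hi => hf i (Finset.mem_filter.1 hi).1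
    _ ≤ 1 • c := nsmul_le_nsmul_left hc hcard
    _ = c := one_nsmul c

theorem tsum_le_of_nonneg_of_le_div_two_pow {f : ℕ → ℝ} {a : ℝ} (hf0 : ∀ k, 0 ≤ f k)
    (hf : ∀ k, f k ≤ a / 2 / 2 ^ k) : ∑' k, f k ≤ a :=
  calc ∑' k, f k ≤ ∑' k : ℕ, a / 2 / 2 ^ k :=
        (Summable.of_nonneg_of_le hf0 hf (summable_geometric_two' a)).tsum_le_tsum hf
          (summable_geometric_two' a)
    _ = a := tsum_geometric_two' a

/-- `haarFun T ℓ j` is the paper's `e_{2^(ℓ-1)+j}`. -/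
noncomputable def haarFun (T : ℝ) (ℓ j : ℕ) (s : ℝ) : ℝ :=
  Real.sqrt ((2 : ℝ) ^ (ℓ - 1) / T) *
    ((Icc (T * (2 * (j : ℝ) - 2) / 2 ^ ℓ) (T * (2 * (j : ℝ) - 1) / 2 ^ ℓ)).indicator
        (fun _ => (1 : ℝ)) s
      - (Icc (T * (2 * (j : ℝ) - 1) / 2 ^ ℓ) (T * (2 * (j : ℝ)) / 2 ^ ℓ)).indicator
        (fun _ => (1 : ℝ)) s)

noncomputable def haarPrimitive (T : ℝ) (ℓ j : ℕ) (t : ℝ) : ℝ :=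
  ∫ s in (0 : ℝ)..t, haarFun T ℓ j s

theorem continuous_haarPrimitive (T : ℝ) (ℓ j : ℕ) : Continuous (haarPrimitive T ℓ j) :=
  intervalIntegral.continuous_primitive (fun _ _ =>
    (((integrable_indicator_Icc_one _ _).sub (integrable_indicator_Icc_one _ _)).const_mul
      _).intervalIntegrable) 0

section haarPrimitive

variable {T : ℝ} {ℓ j j' : ℕ} {t : ℝ}

theorem haarPrimitive_eq (hT : 0 ≤ T) (hj : 1 ≤ j) (ht : 0 ≤ t) :
    haarPrimitive T ℓ j t = Real.sqrt ((2 : ℝ) ^ (ℓ - 1) / T) *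
      max (T / 2 ^ ℓ - |t - T * (2 * (j : ℝ) - 1) / 2 ^ ℓ|) 0 := by
  have hj' : (1 : ℝ) ≤ j := by exact_mod_cast hj
  have hhm : T / 2 ^ ℓ ≤ T * (2 * (j : ℝ) - 1) / 2 ^ ℓ := by
    gcongr
    nlinarith
  have hleft : T * (2 * (j : ℝ) - 2) / 2 ^ ℓ = T * (2 * j - 1) / 2 ^ ℓ - T / 2 ^ ℓ := by ring
  have hright : T * (2 * (j : ℝ)) / 2 ^ ℓ = T * (2 * j - 1) / 2 ^ ℓ + T / 2 ^ ℓ := by ring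
  rw [haarPrimitive, ← intervalIntegral_indicator_sub_indicator_eq_tent _ _ _ hhm ht,
    ← intervalIntegral.integral_const_mul]
  simp only [haarFun, hleft, hright]

theorem haarPrimitive_sq_le (hT : 0 < T) (hℓ : 1 ≤ ℓ) (hj : 1 ≤ j) (ht : 0 ≤ t) :
    haarPrimitive T ℓ j t ^ 2 ≤ T / 2 ^ (ℓ + 1) := by
  obtain ⟨l, rfl⟩ := Nat.exists_eq_add_of_le' hℓ
  set h := T / 2 ^ (l + 1)
  set tent := max (h - |t - T * (2 * (j : ℝ) - 1) / 2 ^ (l + 1)|) 0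
  have htent : tent ^ 2 ≤ h ^ 2 :=
    pow_le_pow_left₀ (le_max_right _ _) (max_le (sub_le_self _ (abs_nonneg _)) (by positivity)) 2
  calc haarPrimitive T (l + 1) j t ^ 2 = 2 ^ l / T * tent ^ 2 := by
        rw [haarPrimitive_eq hT.le hj ht, mul_pow, Real.sq_sqrt (by positivity),
          Nat.add_sub_cancel]
    _ ≤ 2 ^ l / T * h ^ 2 := by gcongr
    _ = T / 2 ^ (l + 1 + 1) := by
        simp only [h]
        field_simp
        ring

theorem haarPrimitive_eq_zero_or_eq_zero (hT : 0 ≤ T) (hj : 1 ≤ j) (hj' : 1 ≤ j')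
    (hjj' : j ≠ j') (ht : 0 ≤ t) : haarPrimitive T ℓ j t = 0 ∨ haarPrimitive T ℓ j' t = 0 := by
  have hsep : (1 : ℝ) ≤ |(j : ℝ) - j'| := by
    have : (1 : ℤ) ≤ |(j : ℤ) - j'| := Int.one_le_abs (sub_ne_zero.2 (by exact_mod_cast hjj'))
    exact_mod_cast this
  have hdist : 2 * (T / 2 ^ ℓ) ≤
      |T * (2 * (j : ℝ) - 1) / 2 ^ ℓ - T * (2 * (j' : ℝ) - 1) / 2 ^ ℓ| := by
    have : T * (2 * (j : ℝ) - 1) / 2 ^ ℓ - T * (2 * (j' : ℝ) - 1) / 2 ^ ℓ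
        = 2 * (T / 2 ^ ℓ) * ((j : ℝ) - j') := by ring
    rw [this, abs_mul, abs_of_nonneg (by positivity)]
    exact le_mul_of_one_le_right (by positivity) hsep
  rcases le_abs_sub_or_le_abs_sub hdist t with h | h
  · left
    rw [haarPrimitive_eq hT hj ht, max_eq_right (by linarith), mul_zero]
  · right
    rw [haarPrimitive_eq hT hj' ht, max_eq_right (by linarith), mul_zero]

theorem sum_haarPrimitive_sq_le (hT : 0 < T) (hℓ : 1 ≤ ℓ) (N : ℕ) (ht : 0 ≤ t) :
    ∑ j ∈ Finset.Icc 1 N, haarPrimitive T ℓ j t ^ 2 ≤ T / 2 ^ (ℓ + 1) := by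
  refine Finset.sum_le_of_pairwise_eq_zero_or_eq_zero (by positivity)
    (fun j hj => haarPrimitive_sq_le hT hℓ (Finset.mem_Icc.1 hj).1 ht)
    (fun j hj j' hj' hjj' => ?_)
  simpa only [pow_eq_zero_iff two_ne_zero] using haarPrimitive_eq_zero_or_eq_zero (ℓ := ℓ) hT.le
    (Finset.mem_Icc.1 hj).1 (Finset.mem_Icc.1 hj').1 hjj' ht

theorem sum_haarPrimitive_sq_add_integral_le (hT : 0 < T) (hℓ : 1 ≤ ℓ) (N : ℕ) (ht : 0 ≤ t) :
    ∑ j ∈ Finset.Icc 1 N,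
        (haarPrimitive T ℓ j t ^ 2 + ∫ τ in (0 : ℝ)..t, haarPrimitive T ℓ j τ ^ 2)
      ≤ (1 + t) * (T / 2 ^ (ℓ + 1)) := by
  have hcont : ∀ j, Continuous fun τ => haarPrimitive T ℓ j τ ^ 2 :=
    fun j => (continuous_haarPrimitive T ℓ j).pow 2
  have hintegral : ∑ j ∈ Finset.Icc 1 N, ∫ τ in (0 : ℝ)..t, haarPrimitive T ℓ j τ ^ 2
      ≤ t * (T / 2 ^ (ℓ + 1)) :=
    calc ∑ j ∈ Finset.Icc 1 N, ∫ τ in (0 : ℝ)..t, haarPrimitive T ℓ j τ ^ 2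
        = ∫ τ in (0 : ℝ)..t, ∑ j ∈ Finset.Icc 1 N, haarPrimitive T ℓ j τ ^ 2 :=
          (intervalIntegral.integral_finsetSum fun j _ => (hcont j).intervalIntegrable 0 t).symm
      _ ≤ ∫ _ in (0 : ℝ)..t, T / 2 ^ (ℓ + 1) :=
          intervalIntegral.integral_mono_on ht
            ((continuous_finsetSum _ fun j _ => hcont j).intervalIntegrable 0 t)
            intervalIntegrable_const fun τ hτ => sum_haarPrimitive_sq_le hT hℓ N hτ.1
      _ = t * (T / 2 ^ (ℓ + 1)) := by rw [intervalIntegral.integral_const, sub_zero, smul_eq_mul]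
  rw [Finset.sum_add_distrib]
  linarith [sum_haarPrimitive_sq_le hT hℓ N ht]

end haarPrimitive

/-- tail bound for the antiderivatives of the Haar basis functions. -/
theorem haar_antiderivative_tail_bound
    (T : ℝ) (hT : 0 < T)
    (E : ℕ → ℕ → ℝ → ℝ)
    (hE : ∀ ℓ j t, E ℓ j t = ∫ s in (0:ℝ)..t,
      Real.sqrt ((2:ℝ) ^ (ℓ - 1) / T) *
        ((Set.Icc (T * (2 * (j:ℝ) - 2) / 2 ^ ℓ) (T * (2 * (j:ℝ) - 1) / 2 ^ ℓ)).indicator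
            (fun _ => (1:ℝ)) s
          - (Set.Icc (T * (2 * (j:ℝ) - 1) / 2 ^ ℓ) (T * (2 * (j:ℝ)) / 2 ^ ℓ)).indicator
            (fun _ => (1:ℝ)) s)) :
    ∀ n : ℕ, ∀ t ∈ Set.Icc (0:ℝ) T,
      ∑' k : ℕ, ∑ j ∈ Finset.Icc 1 (2 ^ n),
        ((E (n + 1 + k) j t) ^ 2 + ∫ τ in (0:ℝ)..t, (E (n + 1 + k) j τ) ^ 2)
      ≤ 2 * T * (1 + t) / 2 ^ n := by
  rintro n t ⟨ht, -⟩
  obtain rfl : E = haarPrimitive T := funext fun ℓ => funext fun j => funext fun t => hE ℓ j t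
  calc _ ≤ (1 + t) * T / 2 ^ (n + 1) := by
        refine tsum_le_of_nonneg_of_le_div_two_pow (fun k => ?_) (fun k => ?_)
        · exact Finset.sum_nonneg fun j _ =>
            add_nonneg (sq_nonneg _) (intervalIntegral.integral_nonneg ht fun _ _ => sq_nonneg _)
        · convert sum_haarPrimitive_sq_add_integral_le hT (by omega : 1 ≤ n + 1 + k) (2 ^ n) ht
            using 1
          rw [pow_add, pow_add, pow_add]
          ring
    _ = 2 * T * (1 + t) / 2 ^ n / 4 := by rw [pow_succ]; ring
    _ ≤ 2 * T * (1 + t) / 2 ^ n := div_le_self (by positivity) (by norm_num)
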